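/- arXiv:1411.4855 — 2 statements merged into one kernel-verified Lean document; each statement's English description precedes it below -/
import Mathlib

section
/- If C is a sparse Cantor subset of ℝ, then the group of homeomorphisms of C arising as restrictions to C of C¹ diffeomorphisms of ℝ that preserve C is countable. -/
/-!
If two `C¹` diffeomorphisms `φ₁`, `φ₂` preserving `C` satisfy the same bounds on their derivatives
and on those of their inverses, and the same moduli of continuity of these derivatives, on the hull
of `C`, and are uniformly close on `C`, then they agree on `C`. Indeed `θ = φ₂⁻¹ ∘ φ₁` is an
increasing `C¹` map preserving `C`, `ε`-close to the identity on `C`, whose derivative varies by at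
most `σ / 4` at some scale `R ≫ ε`. If `θ` moved a point `x` of `C` to the right, the first point
`p ≥ x` of `C` not moved to the right would be fixed and approached from the left by points moved
to the right. Sparseness gives a gap of `C` just left of `p` of proportional length, over which such
a point has to jump; hence `θ' p ≤ 1 - 3σ/4`, and every point `y` of `C` within `R` before `p` is
moved right by at least `σ (p - y) / 2`. Then the first such point lies within `2ε/σ` of `p`, while
its preimage lies more than `R` before `p` and is moved by at most `ε`: impossible. Reflecting,
`θ` moves no point to the left either.

Such controls are indexed by countably many parameters, and each class of restrictions is then
uniformly discrete, hence countable in the separable space `C(C, ℝ)`.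
-/

open Set Filter Topology Asymptotics

/-- A Cantor subset of the reals: nonempty, compact, perfect, totally disconnected. -/
def IsCantorSet (C : Set ℝ) : Prop :=
  C.Nonempty ∧ IsCompact C ∧ Perfect C ∧ IsTotallyDisconnected C

/-- `C` is `σ`-sparse: any two points of `C` bound a complementary open interval of
relative length at least `σ`. -/
def SparseSet (σ : ℝ) (C : Set ℝ) : Prop :=
  ∀ a ∈ C, ∀ b ∈ C, a < b →
    ∃ α β : ℝ, a ≤ α ∧ α < β ∧ β ≤ b ∧ Set.Ioo α β ∩ C = ∅ ∧ σ * (b - a) ≤ β - α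

/-- `φ` is a `C¹` diffeomorphism of `ℝ` with inverse `ψ`. -/
def IsC1DiffeoPair (φ ψ : ℝ → ℝ) : Prop :=
  ContDiff ℝ 1 φ ∧ ContDiff ℝ 1 ψ ∧ Function.LeftInverse ψ φ ∧ Function.RightInverse ψ φ

open Function

theorem abs_sub_sub_mul_le_of_abs_sub_le {f f' : ℝ → ℝ} {c η x y : ℝ} (hxy : x ≤ y)
    (hf : ∀ t ∈ Icc x y, HasDerivAt f (f' t) t) (hf' : ∀ t ∈ Icc x y, |f' t - c| ≤ η) :
    |f y - f x - c * (y - x)| ≤ η * (y - x) := by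
  have hg : ∀ t ∈ Icc x y, HasDerivWithinAt (fun t => f t - c * t) (f' t - c) (Icc x y) t :=
    fun t ht => by simpa using ((hf t ht).fun_sub ((hasDerivAt_id t).const_mul c)).hasDerivWithinAt
  have := (convex_Icc x y).norm_image_sub_le_of_norm_hasDerivWithin_le hg hf'
    (left_mem_Icc.2 hxy) (right_mem_Icc.2 hxy)
  simp only [Real.norm_eq_abs, abs_of_nonneg (sub_nonneg.2 hxy)] at this
  convert this using 2
  ring

theorem countable_of_forall_abs_sub_le_imp_eq {X : Type*} [TopologicalSpace X] [CompactSpace X]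
    [SecondCountableTopology X] [T2Space X] {F : Set (X → ℝ)} (hF : ∀ f ∈ F, Continuous f)
    {δ : ℝ} (hδ : 0 < δ) (hsep : ∀ f ∈ F, ∀ g ∈ F, (∀ x, |f x - g x| ≤ δ) → f = g) :
    F.Countable := by
  have hT : ((⇑) ⁻¹' F : Set C(X, ℝ)).Countable := by
    refine PairwiseDisjoint.countable_of_isOpen (s := fun g : C(X, ℝ) => Metric.ball g (δ / 2))
      ?_ (fun _ _ => Metric.isOpen_ball) (fun g _ => ⟨g, Metric.mem_ball_self (half_pos hδ)⟩)
    intro g hg h hh hgh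
    refine disjoint_left.2 fun k (hkg : dist k g < δ / 2) (hkh : dist k h < δ / 2) =>
      hgh (DFunLike.coe_injective (hsep _ hg _ hh fun x => ?_))
    have : dist g h ≤ δ := by linarith [dist_triangle_left g h k]
    exact (ContinuousMap.dist_le hδ.le).1 this x
  refine (hT.image (⇑)).mono fun f hf => ?_
  exact ⟨⟨f, hF f hf⟩, hf, rfl⟩

theorem mapsTo_Icc_sInf_sSup {C : Set ℝ} (hC : IsCompact C) (hne : C.Nonempty) {φ : ℝ → ℝ}
    (hφ : Monotone φ ∨ Antitone φ) (hmaps : MapsTo φ C C) :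
    MapsTo φ (Icc (sInf C) (sSup C)) (Icc (sInf C) (sSup C)) := by
  have hCK := subset_Icc_csInf_csSup hC.bddBelow hC.bddAbove
  have hinf := hCK (hmaps (hC.sInf_mem hne))
  have hsup := hCK (hmaps (hC.sSup_mem hne))
  intro x hx
  rcases hφ with hφ | hφ
  · exact ordConnected_Icc.out hinf hsup ⟨hφ hx.1, hφ hx.2⟩
  · exact ordConnected_Icc.out hsup hinf ⟨hφ hx.2, hφ hx.1⟩

section Rigidity

variable {σ ε R a b : ℝ} {C : Set ℝ} {θ θ' : ℝ → ℝ}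

theorem SparseSet.neg (hsp : SparseSet σ C) : SparseSet σ (-C) := by
  intro x hx y hy hxy
  obtain ⟨α, β, hyα, hαβ, hβx, hgap, hlen⟩ := hsp (-y) hy (-x) hx (neg_lt_neg hxy)
  refine ⟨-β, -α, by linarith, by linarith, by linarith, ?_, by linarith⟩
  rw [← neg_Ioo, ← inter_neg, hgap, neg_empty]

theorem SparseSet.exists_gap (hsp : SparseSet σ C) (hC : IsClosed C) {x y : ℝ} (hx : x ∈ C)
    (hy : y ∈ C) (hxy : x < y) :
    ∃ u ∈ C, ∃ v ∈ C, x ≤ u ∧ v ≤ y ∧ σ * (y - x) ≤ v - u ∧ ∀ c ∈ C, c ≤ u ∨ v ≤ c := by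
  obtain ⟨α, β, hxα, -, hβy, hgap, hlen⟩ := hsp x hx y hy hxy
  have hbdd : BddAbove (C ∩ Iic α) := ⟨α, fun _ h => h.2⟩
  have hbdd' : BddBelow (C ∩ Ici β) := ⟨β, fun _ h => h.2⟩
  obtain ⟨huC, huα⟩ := (hC.inter isClosed_Iic).csSup_mem ⟨x, hx, hxα⟩ hbdd
  obtain ⟨hvC, hβv⟩ := (hC.inter isClosed_Ici).csInf_mem ⟨y, hy, hβy⟩ hbdd'
  refine ⟨_, huC, _, hvC, le_csSup hbdd ⟨hx, hxα⟩, csInf_le hbdd' ⟨hy, hβy⟩,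
    by linarith [mem_Iic.mp huα, mem_Ici.mp hβv], fun c hc => ?_⟩
  rcases le_or_gt c α with hcα | hαc
  · exact Or.inl (le_csSup hbdd ⟨hc, hcα⟩)
  rcases le_or_gt β c with hβc | hcβ
  · exact Or.inr (csInf_le hbdd' ⟨hc, hβc⟩)
  exact (hgap.subset ⟨⟨hαc, hcβ⟩, hc⟩).elim

theorem exists_isFixedPt_of_lt_apply (hC : IsCompact C) (hθc : Continuous θ) (hmono : StrictMono θ)
    (hmaps : MapsTo θ C C) {x : ℝ} (hx : x ∈ C) (hxθ : x < θ x) :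
    ∃ p ∈ C, x < p ∧ IsFixedPt θ p ∧ ∀ z ∈ C, x ≤ z → z < p → z < θ z := by
  set P := C ∩ {z | x ≤ z ∧ θ z ≤ z}
  have hP : IsCompact P := hC.inter_right
    ((isClosed_le continuous_const continuous_id).inter (isClosed_le hθc continuous_id))
  have hmax : sSup C ∈ C := hC.sSup_mem ⟨x, hx⟩
  obtain ⟨hpC, hxp, hθp⟩ : sInf P ∈ P :=
    hP.sInf_mem ⟨_, hmax, le_csSup hC.bddAbove hx, le_csSup hC.bddAbove (hmaps hmax)⟩
  have hxp : x < sInf P := hxp.lt_of_ne fun h => by rw [← h] at hθp; linarith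
  refine ⟨sInf P, hpC, hxp, le_antisymm hθp ?_, fun z hz hxz hzp => ?_⟩
  · exact csInf_le hP.bddBelow
      ⟨hmaps hpC, hxθ.le.trans (hmono.monotone hxp.le), hmono.monotone hθp⟩
  · by_contra! h
    exact (csInf_le hP.bddBelow ⟨hz, hxz, h⟩).not_gt hzp

theorem exists_right_movers_near_isFixedPt (hC : IsCompact C) (hθc : Continuous θ)
    (hmono : StrictMono θ) (hmaps : MapsTo θ C C) {x : ℝ} (hx : x ∈ C) (hxθ : x < θ x)
    (hR : 0 < R) : ∃ p ∈ C, IsFixedPt θ p ∧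
      ∃ z ∈ C, z < p ∧ p - z ≤ R ∧ ∀ y ∈ C, z ≤ y → y < p → y < θ y := by
  obtain ⟨p, hpC, hxp, hfix, hmoved⟩ := exists_isFixedPt_of_lt_apply hC hθc hmono hmaps hx hxθ
  refine ⟨p, hpC, hfix, ?_⟩
  suffices ∃ z ∈ C, x ≤ z ∧ z < p ∧ p - z ≤ R from
    let ⟨z, hzC, hxz, hzp, hpz⟩ := this
    ⟨z, hzC, hzp, hpz, fun y hy hzy hyp => hmoved y hy (hxz.trans hzy) hyp⟩
  by_cases hxR : p - R < x
  · exact ⟨x, hx, le_rfl, hxp, by linarith⟩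
  rw [not_lt] at hxR
  -- the last point `s` of `C` before `p - R` is moved right, but not past `p`
  have hS : IsCompact (C ∩ Icc x (p - R)) := hC.inter_right isClosed_Icc
  obtain ⟨hsC, hxs, hsR⟩ := hS.sSup_mem ⟨x, hx, le_rfl, hxR⟩
  set s := sSup (C ∩ Icc x (p - R))
  have hsθ : s < θ s := hmoved s hsC hxs (by linarith)
  have hθsp : θ s < p := hfix ▸ hmono (show s < p by linarith)
  refine ⟨θ s, hmaps hsC, by linarith, hθsp, ?_⟩
  by_contra! h
  exact (le_csSup hS.bddAbove ⟨hmaps hsC, by linarith, by linarith⟩).not_gt hsθ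

theorem abs_deriv_sub_le_of_mem_Icc (hCK : C ⊆ Icc a b)
    (hosc : ∀ x ∈ Icc a b, ∀ y ∈ Icc a b, |x - y| ≤ R → |θ' x - θ' y| ≤ σ / 4)
    {y p : ℝ} (hy : y ∈ C) (hp : p ∈ C) (hpy : p - y ≤ R) :
    ∀ t ∈ Icc y p, |θ' t - θ' p| ≤ σ / 4 := fun t ht =>
  hosc t ⟨(hCK hy).1.trans ht.1, ht.2.trans (hCK hp).2⟩ p (hCK hp)
    (abs_le.2 ⟨by linarith [ht.1], by linarith [ht.1, ht.2]⟩)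

theorem deriv_le_of_right_movers (hσ : 0 < σ) (hsp : SparseSet σ C) (hC : IsClosed C)
    (hCK : C ⊆ Icc a b) (hθ : ∀ x, HasDerivAt θ (θ' x) x) (hmaps : MapsTo θ C C)
    (hosc : ∀ x ∈ Icc a b, ∀ y ∈ Icc a b, |x - y| ≤ R → |θ' x - θ' y| ≤ σ / 4)
    {p z : ℝ} (hpC : p ∈ C) (hfix : IsFixedPt θ p) (hzC : z ∈ C) (hzp : z < p) (hpz : p - z ≤ R)
    (hmoved : ∀ y ∈ C, z ≤ y → y < p → y < θ y) : θ' p ≤ 1 - 3 * σ / 4 := by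
  obtain ⟨u, huC, v, hvC, hzu, hvp, hgap, hsep⟩ := hsp.exists_gap hC hzC hpC hzp
  have hup : u < p := by nlinarith
  have hvθ : v ≤ θ u := (hsep _ (hmaps huC)).resolve_left (hmoved u huC hzu hup).not_ge
  have hmvt := abs_sub_sub_mul_le_of_abs_sub_le hup.le (fun t _ => hθ t)
    (abs_deriv_sub_le_of_mem_Icc hCK hosc huC hpC (by linarith))
  rw [hfix.eq] at hmvt
  have : θ' p * (p - u) ≤ (1 - 3 * σ / 4) * (p - u) := by
    nlinarith [(abs_le.1 hmvt).1]
  exact le_of_mul_le_mul_right this (by linarith)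

theorem mul_sub_le_apply_sub_of_deriv_le (hCK : C ⊆ Icc a b)
    (hθ : ∀ x, HasDerivAt θ (θ' x) x)
    (hosc : ∀ x ∈ Icc a b, ∀ y ∈ Icc a b, |x - y| ≤ R → |θ' x - θ' y| ≤ σ / 4)
    {p y : ℝ} (hpC : p ∈ C) (hfix : IsFixedPt θ p) (hθ'p : θ' p ≤ 1 - 3 * σ / 4)
    (hyC : y ∈ C) (hyp : y ≤ p) (hpy : p - y ≤ R) : σ / 2 * (p - y) ≤ θ y - y := by
  have hmvt := abs_sub_sub_mul_le_of_abs_sub_le hyp (fun t _ => hθ t)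
    (abs_deriv_sub_le_of_mem_Icc hCK hosc hyC hpC hpy)
  rw [hfix.eq] at hmvt
  nlinarith [(abs_le.1 hmvt).2]

theorem SparseSet.apply_le_self (hσ : 0 < σ) (hsp : SparseSet σ C) (hC : IsCompact C)
    (hCK : C ⊆ Icc a b) (hθ : ∀ x, HasDerivAt θ (θ' x) x) (hmono : StrictMono θ)
    (himg : θ '' C = C) (hnear : ∀ x ∈ C, |θ x - x| ≤ ε)
    (hosc : ∀ x ∈ Icc a b, ∀ y ∈ Icc a b, |x - y| ≤ R → |θ' x - θ' y| ≤ σ / 4)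
    (hεR : ε * (σ + 2) < σ * R) {x : ℝ} (hx : x ∈ C) : θ x ≤ x := by
  by_contra! hxθ
  have hθc : Continuous θ := continuous_iff_continuousAt.2 fun x => (hθ x).continuousAt
  have hmaps : MapsTo θ C C := (mapsTo_image θ C).mono_right himg.le
  have hR : 0 < R := by nlinarith [(abs_nonneg _).trans (hnear x hx)]
  obtain ⟨p, hpC, hfix, z, hzC, hzp, hpz, hmoved⟩ :=
    exists_right_movers_near_isFixedPt hC hθc hmono hmaps hx hxθ hR
  have hθ'p := deriv_le_of_right_movers hσ hsp hC.isClosed hCK hθ hmaps hosc hpC hfix hzC hzp hpz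
    hmoved
  -- the first point `m` of `C` within `R` of `p` is moved right by `θ`, so its preimage `w`
  -- lies more than `R` before `p`; but both moves are `O(ε)`
  have hM : IsCompact (C ∩ Icc (p - R) p) := hC.inter_right isClosed_Icc
  obtain ⟨hmC, hpm, hmp⟩ := hM.sInf_mem ⟨z, hzC, by linarith, hzp.le⟩
  set m := sInf (C ∩ Icc (p - R) p)
  have hmz : m ≤ z := csInf_le hM.bddBelow ⟨hzC, by linarith, hzp.le⟩
  have hdrift := mul_sub_le_apply_sub_of_deriv_le hCK hθ hosc hpC hfix hθ'p hmC hmp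
    (by linarith)
  have hm_moved : σ * (p - m) ≤ 2 * ε := by linarith [le_abs_self (θ m - m), hnear m hmC]
  obtain ⟨w, hwC, hwm⟩ := himg.ge hmC
  have hw_moved : m - w ≤ ε := hwm ▸ (le_abs_self _).trans (hnear w hwC)
  have hwm' : w < m := hmono.lt_iff_lt.1 (by rw [hwm]; nlinarith)
  have hwR : w < p - R := by
    by_contra! h
    exact hwm'.not_ge (csInf_le hM.bddBelow ⟨hwC, h, by linarith⟩)
  nlinarith [mul_le_mul_of_nonneg_left hw_moved hσ.le]

theorem SparseSet.apply_eq_self (hσ : 0 < σ) (hsp : SparseSet σ C) (hC : IsCompact C)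
    (hCK : C ⊆ Icc a b) (hθ : ∀ x, HasDerivAt θ (θ' x) x) (hmono : StrictMono θ)
    (himg : θ '' C = C) (hnear : ∀ x ∈ C, |θ x - x| ≤ ε)
    (hosc : ∀ x ∈ Icc a b, ∀ y ∈ Icc a b, |x - y| ≤ R → |θ' x - θ' y| ≤ σ / 4)
    (hεR : ε * (σ + 2) < σ * R) {x : ℝ} (hx : x ∈ C) : θ x = x := by
  refine le_antisymm (hsp.apply_le_self hσ hC hCK hθ hmono himg hnear hosc hεR hx) ?_
  have h := hsp.neg.apply_le_self (a := -b) (b := -a) (θ := fun t => -θ (-t))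
    (θ' := fun t => θ' (-t)) hσ hC.neg
    (fun t ht => ⟨by linarith [(hCK ht).2], by linarith [(hCK ht).1]⟩)
    (fun t => by simpa using ((hθ (-t)).comp t (hasDerivAt_neg t)).fun_neg)
    (fun s t hst => neg_lt_neg (hmono (neg_lt_neg hst)))
    (by
      rw [show (fun t => -θ (-t)) = (fun t => -t) ∘ θ ∘ (fun t => -t) from rfl, image_comp,
        image_neg_eq_neg, image_comp, image_neg_eq_neg, neg_neg, himg])
    (fun t ht => by rw [← abs_neg]; convert hnear (-t) ht using 2; ring)
    (fun s hs t ht hst => hosc (-s) ⟨by linarith [hs.2], by linarith [hs.1]⟩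
      (-t) ⟨by linarith [ht.2], by linarith [ht.1]⟩ (by rwa [neg_sub_neg, abs_sub_comm]))
    hεR (x := -x) (by rwa [Set.mem_neg, neg_neg])
  simp only [neg_neg, neg_le_neg_iff] at h
  exact h

end Rigidity

section DerivControl

def DerivControlledOn (f : ℝ → ℝ) (K : Set ℝ) (L R η : ℝ) : Prop :=
  (∀ x ∈ K, |deriv f x| ≤ L) ∧ ∀ x ∈ K, ∀ y ∈ K, |x - y| ≤ R → |deriv f x - deriv f y| ≤ η

variable {f g : ℝ → ℝ} {K : Set ℝ} {L R η : ℝ}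

theorem DerivControlledOn.abs_sub_le (h : DerivControlledOn f K L R η) (hf : Differentiable ℝ f)
    (hK : Convex ℝ K) {x y : ℝ} (hx : x ∈ K) (hy : y ∈ K) : |f x - f y| ≤ L * |x - y| := by
  simpa only [Real.norm_eq_abs] using
    hK.norm_image_sub_le_of_norm_deriv_le (fun z _ => hf z) (fun z hz => h.1 z hz) hy hx

theorem DerivControlledOn.abs_deriv_comp_sub_le (hf : DerivControlledOn f K L R η)
    (hg : DerivControlledOn g K L (L * R) η) (hfd : Differentiable ℝ f) (hK : Convex ℝ K)
    (hmaps : MapsTo f K K) {x y : ℝ} (hx : x ∈ K) (hy : y ∈ K) (hxy : |x - y| ≤ R) :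
    |deriv g (f x) * deriv f x - deriv g (f y) * deriv f y| ≤ 2 * L * η := by
  have hL : 0 ≤ L := (abs_nonneg _).trans (hf.1 x hx)
  have hfxy : |f x - f y| ≤ L * R :=
    (hf.abs_sub_le hfd hK hx hy).trans (mul_le_mul_of_nonneg_left hxy hL)
  calc |deriv g (f x) * deriv f x - deriv g (f y) * deriv f y|
      = |deriv g (f x) * (deriv f x - deriv f y) +
          deriv f y * (deriv g (f x) - deriv g (f y))| := by
        ring_nf
    _ ≤ |deriv g (f x)| * |deriv f x - deriv f y| +
        |deriv f y| * |deriv g (f x) - deriv g (f y)| := by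
        rw [← abs_mul, ← abs_mul]; exact abs_add_le _ _
    _ ≤ L * η + L * η := add_le_add
        (mul_le_mul (hg.1 _ (hmaps hx)) (hf.2 x hx y hy hxy) (abs_nonneg _) hL)
        (mul_le_mul (hf.1 y hy) (hg.2 _ (hmaps hx) _ (hmaps hy) hfxy) (abs_nonneg _) hL)
    _ = 2 * L * η := by ring

theorem exists_derivControlledOn (hK : IsCompact K) (hf : ContDiff ℝ 1 f) (hg : ContDiff ℝ 1 g)
    {c : ℝ} (hc : 0 < c) : ∃ n k : ℕ,
      DerivControlledOn f K (n + 1) (1 / (k + 1)) (c / (n + 1)) ∧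
      DerivControlledOn g K (n + 1) ((n + 1) * (1 / (k + 1))) (c / (n + 1)) := by
  have hf' := hf.continuous_deriv le_rfl
  have hg' := hg.continuous_deriv le_rfl
  obtain ⟨B₁, hB₁⟩ := hK.exists_bound_of_continuousOn hf'.continuousOn
  obtain ⟨B₂, hB₂⟩ := hK.exists_bound_of_continuousOn hg'.continuousOn
  obtain ⟨n, hn⟩ := exists_nat_ge (max B₁ B₂)
  have hη : 0 < c / (n + 1) := by positivity
  obtain ⟨r₁, hr₁, hosc₁⟩ := Metric.uniformContinuousOn_iff_le.1
    (hK.uniformContinuousOn_of_continuous hf'.continuousOn) _ hη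
  obtain ⟨r₂, hr₂, hosc₂⟩ := Metric.uniformContinuousOn_iff_le.1
    (hK.uniformContinuousOn_of_continuous hg'.continuousOn) _ hη
  obtain ⟨k, hk⟩ := exists_nat_one_div_lt (lt_min hr₁ (div_pos hr₂ n.cast_add_one_pos))
  have hk₁ : 1 / ((k : ℝ) + 1) ≤ r₁ := (hk.trans_le (min_le_left _ _)).le
  have hk₂ : ((n : ℝ) + 1) * (1 / (k + 1)) ≤ r₂ := by
    rw [mul_comm, ← le_div_iff₀ n.cast_add_one_pos]
    exact (hk.trans_le (min_le_right _ _)).le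
  refine ⟨n, k, ⟨fun x hx => ?_, fun x hx y hy hxy => hosc₁ x hx y hy (hxy.trans hk₁)⟩,
    ⟨fun x hx => ?_, fun x hx y hy hxy => hosc₂ x hx y hy (hxy.trans hk₂)⟩⟩
  · linarith [Real.norm_eq_abs _ ▸ hB₁ x hx, le_max_left B₁ B₂]
  · linarith [Real.norm_eq_abs _ ▸ hB₂ x hx, le_max_right B₁ B₂]

end DerivControl

def controlledRestrictions (C : Set ℝ) (s : Bool) (L R η : ℝ) : Set (C → ℝ) :=
  {f | ∃ φ ψ : ℝ → ℝ, IsC1DiffeoPair φ ψ ∧ φ '' C = C ∧ (∀ x : C, f x = φ x) ∧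
    (bif s then StrictMono φ else StrictAnti φ) ∧
    DerivControlledOn φ (Icc (sInf C) (sSup C)) L R η ∧
    DerivControlledOn ψ (Icc (sInf C) (sSup C)) L (L * R) η}

section Restrictions

variable {σ L R η δ : ℝ} {C : Set ℝ} {s : Bool}

theorem eq_of_mem_controlledRestrictions (hσ : 0 < σ) (hsp : SparseSet σ C) (hC : IsCompact C)
    (hne : C.Nonempty) (hη : 2 * L * η ≤ σ / 4) {f g : C → ℝ}
    (hf : f ∈ controlledRestrictions C s L R η) (hg : g ∈ controlledRestrictions C s L R η)
    (hδ : L * δ * (σ + 2) < σ * R) (hfg : ∀ x, |f x - g x| ≤ δ) : f = g := by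
  obtain ⟨φ₁, _, hp₁, himg₁, hf, hor₁, hφ₁, -⟩ := hf
  obtain ⟨φ₂, ψ₂, hp₂, himg₂, hg, hor₂, -, hψ₂⟩ := hg
  have hCK := subset_Icc_csInf_csSup hC.bddBelow hC.bddAbove
  have hL : 0 ≤ L := (abs_nonneg _).trans (hφ₁.1 _ (hCK (hC.sInf_mem hne)))
  have hd₁ : Differentiable ℝ φ₁ := hp₁.1.differentiable one_ne_zero
  have hdψ₂ : Differentiable ℝ ψ₂ := hp₂.2.1.differentiable one_ne_zero
  obtain ⟨hmono, hφ₁mono⟩ : StrictMono (ψ₂ ∘ φ₁) ∧ (Monotone φ₁ ∨ Antitone φ₁) := by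
    cases s <;> simp only [cond_false, cond_true] at hor₁ hor₂
    · refine ⟨fun x y hxy => hor₂.lt_iff_gt.1 ?_, Or.inr hor₁.antitone⟩
      simpa only [comp_apply, hp₂.2.2.2 _] using hor₁ hxy
    · refine ⟨fun x y hxy => hor₂.lt_iff_lt.1 ?_, Or.inl hor₁.monotone⟩
      simpa only [comp_apply, hp₂.2.2.2 _] using hor₁ hxy
  have himg : (ψ₂ ∘ φ₁) '' C = C := by
    rw [image_comp, himg₁]
    nth_rw 1 [← himg₂]
    rw [← image_comp, hp₂.2.2.1.comp_eq_id, image_id]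
  have hnear : ∀ x ∈ C, |(ψ₂ ∘ φ₁) x - x| ≤ L * δ := fun x hx => calc
    |ψ₂ (φ₁ x) - x| = |ψ₂ (φ₁ x) - ψ₂ (φ₂ x)| := by rw [hp₂.2.2.1 x]
    _ ≤ L * |φ₁ x - φ₂ x| := hψ₂.abs_sub_le hdψ₂ (convex_Icc _ _)
        (hCK (himg₁ ▸ mem_image_of_mem φ₁ hx)) (hCK (himg₂ ▸ mem_image_of_mem φ₂ hx))
    _ ≤ L * δ := mul_le_mul_of_nonneg_left (by simpa only [hf, hg] using hfg ⟨x, hx⟩) hL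
  have hmaps := mapsTo_Icc_sInf_sSup hC hne hφ₁mono ((mapsTo_image φ₁ C).mono_right himg₁.le)
  have hfix : ∀ x ∈ C, ψ₂ (φ₁ x) = x := fun x hx =>
    hsp.apply_eq_self hσ hC hCK (fun x => (hdψ₂ (φ₁ x)).hasDerivAt.comp x (hd₁ x).hasDerivAt) hmono
      himg hnear (fun x hx y hy hxy =>
        (hφ₁.abs_deriv_comp_sub_le hψ₂ hd₁ (convex_Icc _ _) hmaps hx hy hxy).trans hη) hδ hx
  funext x
  calc f x = φ₂ (ψ₂ (φ₁ x)) := by rw [hf, hp₂.2.2.2]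
    _ = g x := by rw [hfix x x.2, hg]

theorem countable_controlledRestrictions (hσ : 0 < σ) (hsp : SparseSet σ C) (hC : IsCompact C)
    (hne : C.Nonempty) (hL : 0 < L) (hR : 0 < R) (hη : 2 * L * η ≤ σ / 4) :
    (controlledRestrictions C s L R η).Countable := by
  have := isCompact_iff_compactSpace.1 hC
  refine countable_of_forall_abs_sub_le_imp_eq ?_ (δ := σ * R / (2 * L * (σ + 2)))
    (by positivity) fun f hf g hg hfg => eq_of_mem_controlledRestrictions hσ hsp hC hne hη hf hg
      ?_ hfg
  · rintro f ⟨φ, _, hφ, -, hf, -⟩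
    rw [show f = fun x : C => φ x from funext hf]
    exact hφ.1.continuous.comp continuous_subtype_val
  · have : L * (σ * R / (2 * L * (σ + 2))) * (σ + 2) = σ * R / 2 := by field_simp
    rw [this]
    linarith [mul_pos hσ hR]

end Restrictions

/-- If `C` is a sparse Cantor subset of ℝ, the group of transformations of `C`
induced by `C¹` diffeomorphisms of ℝ preserving `C` is countable. -/
theorem diff1_of_sparse_countable (σ : ℝ) (hσ : 0 < σ) (C : Set ℝ)
    (hC : IsCantorSet C) (hsp : SparseSet σ C) :
    Set.Countable {f : C → ℝ | ∃ φ ψ : ℝ → ℝ, IsC1DiffeoPair φ ψ ∧ φ '' C = C ∧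
      ∀ x : C, f x = φ x} := by
  obtain ⟨hne, hC, -, -⟩ := hC
  refine (countable_iUnion fun s : Bool => countable_iUnion fun n : ℕ =>
    countable_iUnion fun k : ℕ => countable_controlledRestrictions (s := s) (L := n + 1)
      (R := 1 / (k + 1)) (η := σ / 8 / (n + 1)) hσ hsp hC hne (by positivity) (by positivity)
      (le_of_eq (by field_simp; ring))).mono ?_
  rintro f ⟨φ, ψ, hφψ, himg, hf⟩
  obtain ⟨n, k, hφ, hψ⟩ :=
    exists_derivControlledOn isCompact_Icc hφψ.1 hφψ.2.1 (div_pos hσ (by norm_num : (0 : ℝ) < 8))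
  obtain ⟨s, hs⟩ : ∃ s : Bool, bif s then StrictMono φ else StrictAnti φ :=
    (hφψ.1.continuous.strictMono_of_inj hφψ.2.2.1.injective).elim (⟨true, ·⟩) (⟨false, ·⟩)
  exact mem_iUnion₂.2 ⟨s, n, mem_iUnion.2 ⟨k, φ, ψ, hφψ, himg, hf, hs, hφ, hψ⟩⟩
end

section
/- For every point a of the central Cantor set C_λ (λ > 2) and every C¹ diffeomorphism φ of ℝ preserving C_λ, the derivative φ'(a) is an integer power of λ (up to sign). Moreover, for a fixed such φ, the restriction of φ' to C_λ takes only finitely many values. -/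
/-!
Call `(x, y)` a gap of `C` if `x < y` are points of `C` and `(x, y)` misses `C`. By
self-similarity every gap of `C_λ` is the middle gap `(1/λ, (λ-1)/λ)` rescaled by a power
of `λ`, so gap lengths are `(λ-2)λ^{-n}`, and gaps occur arbitrarily close to every point of
`C_λ`. The diffeomorphism `φ` is monotone and preserves `C_λ`, so it maps gaps onto gaps, and
by the mean value theorem `|φ'|` is a power of `λ` somewhere inside every gap. As `φ'` is
continuous and nonvanishing and `{λ^k}` is discrete in `(0, ∞)`, `|φ'(a)|` is a power of `λ`
at every `a ∈ C_λ`; being bounded away from `0` and `∞` on the compact set `C_λ`, it takes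
only finitely many of them.
-/

open Set Filter Topology Asymptotics

/-- `C` is the central Cantor set of parameter `l`: the attractor of the IFS
`φ₀(x) = x/l`, `φ₁(x) = x/l + (l-1)/l`, i.e. the unique nonempty compact set with
`C = φ₀(C) ∪ φ₁(C)`. -/
def IsCentralCantor (l : ℝ) (C : Set ℝ) : Prop :=
  IsCompact C ∧ C.Nonempty ∧
    C = (fun x => x / l) '' C ∪ (fun x => x / l + (l - 1) / l) '' C

section ZPowRange

variable {l : ℝ}

theorem finite_range_zpow_inter_Icc (hl : 1 < l) {m M : ℝ} (hm : 0 < m) :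
    (range (fun k : ℤ => l ^ k) ∩ Icc m M).Finite := by
  obtain ⟨i, hi, -⟩ := exists_mem_Ico_zpow hm hl
  obtain ⟨j, -, hj⟩ := exists_mem_Ico_zpow (hm.trans_le (le_max_right M m)) hl
  refine ((finite_Icc i j).image (fun k : ℤ => l ^ k)).subset ?_
  rintro _ ⟨⟨k, rfl⟩, hkm, hkM⟩
  refine ⟨k, ⟨?_, ?_⟩, rfl⟩
  · exact (zpow_le_zpow_iff_right₀ hl).mp (hi.trans hkm)
  · exact Int.lt_add_one_iff.mp <|
      (zpow_lt_zpow_iff_right₀ hl).mp (hkM.trans_lt ((le_max_left M m).trans_lt hj))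

theorem mem_range_zpow_of_mem_closure (hl : 1 < l) {A : ℝ} (hA : 0 < A)
    (h : A ∈ closure (range fun k : ℤ => l ^ k)) : A ∈ range fun k : ℤ => l ^ k := by
  have hA' : A ∈ Ioo (A / 2) (2 * A) := ⟨by linarith, by linarith⟩
  have hclosed := (finite_range_zpow_inter_Icc hl (M := 2 * A) (half_pos hA)).isClosed
  have : A ∈ closure (range (fun k : ℤ => l ^ k) ∩ Icc (A / 2) (2 * A)) :=
    closure_mono (by rw [inter_comm]; exact inter_subset_inter_right _ Ioo_subset_Icc_self)
      (isOpen_Ioo.inter_closure ⟨hA', h⟩)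
  exact (hclosed.closure_eq ▸ this).1

theorem finite_image_of_abs_mem_range_zpow {X : Type*} [TopologicalSpace X] (hl : 1 < l)
    {K : Set X} (hK : IsCompact K) {f : X → ℝ} (hf : ContinuousOn f K)
    (h : ∀ a ∈ K, |f a| ∈ range fun k : ℤ => l ^ k) : (f '' K).Finite := by
  rcases K.eq_empty_or_nonempty with rfl | hne
  · simp
  obtain ⟨p, hp, hpmin⟩ := hK.exists_isMinOn hne hf.abs
  obtain ⟨q, -, hqmax⟩ := hK.exists_isMaxOn hne hf.abs
  have hpos : 0 < |f p| := by
    obtain ⟨k, hk⟩ := h p hp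
    exact hk ▸ zpow_pos (by linarith) k
  have hS := finite_range_zpow_inter_Icc hl (M := |f q|) hpos
  refine (hS.union hS.neg).subset ?_
  rintro _ ⟨a, ha, rfl⟩
  have hmem : |f a| ∈ (range fun k : ℤ => l ^ k) ∩ Icc |f p| |f q| :=
    ⟨h a ha, hpmin ha, hqmax ha⟩
  rcases abs_choice (f a) with hfa | hfa
  · exact Or.inl (hfa ▸ hmem)
  · exact Or.inr (by rw [Set.mem_neg, ← hfa]; exact hmem)

end ZPowRange

theorem abs_deriv_mem_closure_of_slopes {φ : ℝ → ℝ} (hφ : ContDiff ℝ 1 φ) {a : ℝ} {S : Set ℝ}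
    (h : ∀ ε > 0, ∃ x y, x < y ∧ Ioo x y ⊆ Metric.ball a ε ∧ |φ y - φ x| / (y - x) ∈ S) :
    |deriv φ a| ∈ closure S := by
  have hcont : Continuous fun x => |deriv φ x| := (hφ.continuous_deriv le_rfl).abs
  refine hcont.closure_preimage_subset S (Metric.mem_closure_iff.mpr fun ε hε => ?_)
  obtain ⟨x, y, hxy, hball, hS⟩ := h ε hε
  obtain ⟨ξ, hξ, hderiv⟩ := exists_deriv_eq_slope φ hxy hφ.continuous.continuousOn
    (hφ.differentiable one_ne_zero).differentiableOn
  refine ⟨ξ, ?_, Metric.mem_ball'.mp (hball hξ)⟩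
  rwa [mem_preimage, hderiv, abs_div, abs_of_pos (sub_pos.mpr hxy)]

theorem deriv_ne_zero_of_leftInverse {φ ψ : ℝ → ℝ} (h : Function.LeftInverse ψ φ) {x : ℝ}
    (hφ : DifferentiableAt ℝ φ x) (hψ : DifferentiableAt ℝ ψ (φ x)) : deriv φ x ≠ 0 := by
  intro h0
  have := deriv_comp x hψ hφ
  rw [h.comp_eq_id, deriv_id, h0, mul_zero] at this
  exact one_ne_zero this

theorem one_div_lt_sub_one_div {l : ℝ} (hl : 2 < l) : 1 / l < (l - 1) / l :=
  div_lt_div_of_pos_right (by linarith) (by linarith)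

def IsGap (C : Set ℝ) (x y : ℝ) : Prop :=
  x ∈ C ∧ y ∈ C ∧ x < y ∧ Disjoint (Ioo x y) C

namespace IsGap

variable {C : Set ℝ} {f : ℝ → ℝ} {x y : ℝ}

theorem of_image (hf : StrictMono f) (hfC : MapsTo f C C) (hx : x ∈ C) (hy : y ∈ C)
    (h : IsGap C (f x) (f y)) : IsGap C x y := by
  obtain ⟨-, -, hlt, hdisj⟩ := h
  refine ⟨hx, hy, hf.lt_iff_lt.mp hlt, disjoint_left.mpr fun c hc hcC => ?_⟩
  exact disjoint_left.mp hdisj ⟨hf hc.1, hf hc.2⟩ (hfC hcC)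

theorem image (hf : StrictMono f) (hfC : MapsTo f C C) (hsurj : Ioo (f x) (f y) ∩ C ⊆ f '' C)
    (h : IsGap C x y) : IsGap C (f x) (f y) := by
  obtain ⟨hx, hy, hlt, hdisj⟩ := h
  refine ⟨hfC hx, hfC hy, hf hlt, disjoint_left.mpr fun c hc hcC => ?_⟩
  obtain ⟨d, hd, rfl⟩ := hsurj ⟨hc, hcC⟩
  exact disjoint_left.mp hdisj ⟨hf.lt_iff_lt.mp hc.1, hf.lt_iff_lt.mp hc.2⟩ hd

theorem image_of_strictAnti (hf : StrictAnti f) (hfC : f '' C = C) (h : IsGap C x y) :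
    IsGap C (f y) (f x) := by
  obtain ⟨hx, hy, hlt, hdisj⟩ := h
  refine ⟨hfC ▸ mem_image_of_mem f hy, hfC ▸ mem_image_of_mem f hx, hf hlt,
    disjoint_left.mpr fun c hc hcC => ?_⟩
  obtain ⟨d, hd, rfl⟩ := hfC.symm ▸ hcC
  exact disjoint_left.mp hdisj ⟨hf.lt_iff_gt.mp hc.2, hf.lt_iff_gt.mp hc.1⟩ hd

end IsGap

namespace IsCentralCantor

variable {l : ℝ} {C : Set ℝ} {x y : ℝ}

theorem div_mem (hC : IsCentralCantor l C) (hx : x ∈ C) : x / l ∈ C := by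
  rw [hC.2.2]; exact Or.inl ⟨x, hx, rfl⟩

theorem div_add_mem (hC : IsCentralCantor l C) (hx : x ∈ C) : x / l + (l - 1) / l ∈ C := by
  rw [hC.2.2]; exact Or.inr ⟨x, hx, rfl⟩

theorem mem_cases (hC : IsCentralCantor l C) (hx : x ∈ C) :
    (∃ c ∈ C, c / l = x) ∨ ∃ c ∈ C, c / l + (l - 1) / l = x := by
  rwa [hC.2.2] at hx

theorem isGreatest_one (hC : IsCentralCantor l C) (hl : 1 < l) : IsGreatest C 1 := by
  have l0 : 0 < l := by linarith
  obtain ⟨M, hM, hMmax⟩ := hC.1.exists_isGreatest hC.2.1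
  have hM1 : 1 ≤ M := by
    have h := hMmax (hC.div_add_mem hM)
    rw [← add_div, div_le_iff₀ l0] at h
    nlinarith
  suffices M ≤ 1 from le_antisymm this hM1 ▸ ⟨hM, hMmax⟩
  rcases hC.mem_cases hM with ⟨c, hc, rfl⟩ | ⟨c, hc, rfl⟩
  · have h := hMmax hc
    rw [le_div_iff₀ l0] at h
    have : c / l ≤ 0 := div_nonpos_of_nonpos_of_nonneg (by nlinarith) l0.le
    linarith
  · have h := hMmax hc
    rw [← add_div, le_div_iff₀ l0] at h
    rw [← add_div, div_le_one l0]
    nlinarith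

theorem isLeast_zero (hC : IsCentralCantor l C) (hl : 1 < l) : IsLeast C 0 := by
  have l0 : 0 < l := by linarith
  obtain ⟨m, hm, hmmin⟩ := hC.1.exists_isLeast hC.2.1
  have hm0 : m ≤ 0 := by
    have h := hmmin (hC.div_mem hm)
    rw [le_div_iff₀ l0] at h
    nlinarith
  suffices 0 ≤ m from le_antisymm hm0 this ▸ ⟨hm, hmmin⟩
  rcases hC.mem_cases hm with ⟨c, hc, rfl⟩ | ⟨c, hc, rfl⟩
  · have h := hmmin hc
    rw [div_le_iff₀ l0] at h
    exact div_nonneg (by nlinarith) l0.le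
  · have h := hmmin hc
    rw [← add_div, div_le_iff₀ l0] at h
    have : 0 ≤ c / l := div_nonneg (by nlinarith) l0.le
    have : 0 ≤ (l - 1) / l := div_nonneg (by linarith) l0.le
    linarith

theorem subset_Icc (hC : IsCentralCantor l C) (hl : 1 < l) : C ⊆ Icc 0 1 :=
  fun _ hx => ⟨(hC.isLeast_zero hl).2 hx, (hC.isGreatest_one hl).2 hx⟩


theorem div_le_one_div (hC : IsCentralCantor l C) (hl : 1 < l) (hx : x ∈ C) : x / l ≤ 1 / l :=
  div_le_div_of_nonneg_right (hC.subset_Icc hl hx).2 (by linarith)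

theorem sub_one_div_le_div_add (hC : IsCentralCantor l C) (hl : 1 < l) (hx : x ∈ C) :
    (l - 1) / l ≤ x / l + (l - 1) / l :=
  le_add_of_nonneg_left (div_nonneg (hC.subset_Icc hl hx).1 (by linarith))

theorem isGap_middle (hC : IsCentralCantor l C) (hl : 2 < l) : IsGap C (1 / l) ((l - 1) / l) := by
  refine ⟨hC.div_mem (hC.isGreatest_one (by linarith)).1, ?_, one_div_lt_sub_one_div hl,
    disjoint_left.mpr fun c hc hcC => ?_⟩
  · simpa using hC.div_add_mem (hC.isLeast_zero (by linarith)).1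
  rcases hC.mem_cases hcC with ⟨d, hd, rfl⟩ | ⟨d, hd, rfl⟩
  · exact hc.1.not_ge (hC.div_le_one_div (by linarith) hd)
  · exact hc.2.not_ge (hC.sub_one_div_le_div_add (by linarith) hd)

theorem isGap_cases (hC : IsCentralCantor l C) (hl : 2 < l) (h : IsGap C x y) :
    (x = 1 / l ∧ y = (l - 1) / l) ∨ ∃ x' y', IsGap C x' y' ∧ y - x = (y' - x') / l := by
  have l0 : 0 < l := by linarith
  have l1 : 1 < l := by linarith
  have hmid := hC.isGap_middle hl
  have hf₀ : StrictMono fun c => c / l := strictMono_div_right_of_pos l0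
  have hf₁ : StrictMono fun c => c / l + (l - 1) / l := hf₀.add_const _
  obtain ⟨hx, hy, hxy, hdisj⟩ := h
  rcases hC.mem_cases hx with ⟨x', hx', rfl⟩ | ⟨x', hx', rfl⟩ <;>
    rcases hC.mem_cases hy with ⟨y', hy', rfl⟩ | ⟨y', hy', rfl⟩
  · exact Or.inr ⟨x', y', IsGap.of_image hf₀ (fun c => hC.div_mem) hx' hy' ⟨hx, hy, hxy, hdisj⟩,
      by ring⟩
  · have hx₁ := hC.div_le_one_div l1 hx'
    have hy₁ := hC.sub_one_div_le_div_add l1 hy'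
    refine Or.inl ⟨hx₁.antisymm (not_lt.mp fun hlt => ?_), (not_lt.mp fun hlt => ?_).antisymm hy₁⟩
    · exact disjoint_left.mp hdisj ⟨hlt, hmid.2.2.1.trans_le hy₁⟩ hmid.1
    · exact disjoint_left.mp hdisj ⟨hx₁.trans_lt hmid.2.2.1, hlt⟩ hmid.2.1
  · have := hC.div_le_one_div l1 hy'
    have := hC.sub_one_div_le_div_add l1 hx'
    linarith [one_div_lt_sub_one_div hl]
  · exact Or.inr ⟨x', y', IsGap.of_image hf₁ (fun c => hC.div_add_mem) hx' hy'
      ⟨hx, hy, hxy, hdisj⟩, by ring⟩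


theorem isGap_length (hC : IsCentralCantor l C) (hl : 2 < l) (h : IsGap C x y) :
    ∃ n : ℕ, y - x = (l - 2) / l ^ (n + 1) := by
  have l0 : 0 < l := by linarith
  suffices ∀ n : ℕ, ∀ x y, IsGap C x y → l⁻¹ ^ n < y - x →
      ∃ m : ℕ, y - x = (l - 2) / l ^ (m + 1) by
    obtain ⟨n, hn⟩ := exists_pow_lt_of_lt_one (sub_pos.mpr h.2.2.1) (inv_lt_one_of_one_lt₀ (by linarith))
    exact this n x y h hn
  intro n
  induction n with
  | zero =>
    intro x y h hlen
    have hx := hC.subset_Icc (by linarith) h.1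
    have hy := hC.subset_Icc (by linarith) h.2.1
    rw [pow_zero] at hlen
    linarith [hx.1, hy.2]
  | succ n ih =>
    intro x y h hlen
    rcases hC.isGap_cases hl h with ⟨rfl, rfl⟩ | ⟨x', y', h', hxy⟩
    · exact ⟨0, by field_simp; ring⟩
    · have hlen' : l⁻¹ ^ n < y' - x' := by
        rw [hxy, pow_succ, lt_div_iff₀ l0] at hlen
        simpa [l0.ne'] using hlen
      obtain ⟨m, hm⟩ := ih x' y' h' hlen'
      exact ⟨m + 1, by rw [hxy, hm]; field_simp; ring⟩


theorem mem_image_div (hC : IsCentralCantor l C) (hl : 1 < l) (hx : x ∈ C)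
    (hlt : x < (l - 1) / l) : x ∈ (fun c => c / l) '' C := by
  rcases hC.mem_cases hx with h | ⟨c, hc, rfl⟩
  · exact h
  · exact absurd (hC.sub_one_div_le_div_add hl hc) hlt.not_ge

theorem mem_image_div_add (hC : IsCentralCantor l C) (hl : 1 < l) (hx : x ∈ C)
    (hlt : 1 / l < x) : x ∈ (fun c => c / l + (l - 1) / l) '' C := by
  rcases hC.mem_cases hx with ⟨c, hc, rfl⟩ | h
  · exact absurd (hC.div_le_one_div hl hc) hlt.not_ge
  · exact h

theorem exists_isGap_near (hC : IsCentralCantor l C) (hl : 2 < l) (n : ℕ) {a : ℝ} (ha : a ∈ C) :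
    ∃ x y, IsGap C x y ∧ a - l⁻¹ ^ n ≤ x ∧ y ≤ a + l⁻¹ ^ n := by
  have l0 : 0 < l := by linarith
  have l1 : 1 < l := by linarith
  have hmid := hC.isGap_middle hl
  have hf₀ : StrictMono fun c => c / l := strictMono_div_right_of_pos l0
  induction n generalizing a with
  | zero =>
    have ha' := hC.subset_Icc l1 ha
    have : 0 ≤ 1 / l := by positivity
    have : (l - 1) / l ≤ 1 := (div_le_one l0).mpr (by linarith)
    refine ⟨_, _, hmid, ?_, ?_⟩ <;> rw [pow_zero] <;> linarith [ha'.1, ha'.2]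
  | succ n ih =>
    have hr : l⁻¹ ^ (n + 1) = l⁻¹ ^ n / l := by rw [pow_succ, div_eq_mul_inv]
    rcases hC.mem_cases ha with ⟨b, hb, rfl⟩ | ⟨b, hb, rfl⟩
    · obtain ⟨x, y, hg, hx, hy⟩ := ih hb
      have hy' := hC.div_le_one_div l1 hg.2.1
      refine ⟨x / l, y / l, hg.image hf₀ (fun c => hC.div_mem) fun c hc => ?_, ?_, ?_⟩
      · exact hC.mem_image_div l1 hc.2 ((hc.1.2.trans_le hy').trans hmid.2.2.1)
      · rw [hr, ← sub_div]; exact div_le_div_of_nonneg_right hx l0.le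
      · rw [hr, ← add_div]; exact div_le_div_of_nonneg_right hy l0.le
    · obtain ⟨x, y, hg, hx, hy⟩ := ih hb
      have hx' := hC.sub_one_div_le_div_add l1 hg.1
      refine ⟨x / l + (l - 1) / l, y / l + (l - 1) / l,
        hg.image (hf₀.add_const _) (fun c => hC.div_add_mem) fun c hc => ?_, ?_, ?_⟩
      · exact hC.mem_image_div_add l1 hc.2 ((hmid.2.2.1.trans_le hx').trans hc.1.1)
      · have := div_le_div_of_nonneg_right hx l0.le
        rw [sub_div] at this; rw [hr]; linarith
      · have := div_le_div_of_nonneg_right hy l0.le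
        rw [add_div] at this; rw [hr]; linarith


theorem div_mem_range_zpow_of_isGap (hC : IsCentralCantor l C) (hl : 2 < l) {u v : ℝ}
    (h : IsGap C x y) (h' : IsGap C u v) : (v - u) / (y - x) ∈ range fun k : ℤ => l ^ k := by
  have l0 : l ≠ 0 := by linarith
  have l2 : l - 2 ≠ 0 := by linarith
  obtain ⟨m, hm⟩ := hC.isGap_length hl h
  obtain ⟨n, hn⟩ := hC.isGap_length hl h'
  refine ⟨(m : ℤ) - n, ?_⟩
  show l ^ ((m : ℤ) - n) = _
  rw [hm, hn, zpow_sub₀ l0, zpow_natCast, zpow_natCast]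
  field_simp
  ring

theorem slope_mem_range_zpow_of_isGap (hC : IsCentralCantor l C) (hl : 2 < l) {φ : ℝ → ℝ}
    (hφ : StrictMono φ ∨ StrictAnti φ) (hφC : φ '' C = C) (h : IsGap C x y) :
    |φ y - φ x| / (y - x) ∈ range fun k : ℤ => l ^ k := by
  rcases hφ with hφ | hφ
  · rw [abs_of_pos (sub_pos.mpr (hφ h.2.2.1))]
    exact hC.div_mem_range_zpow_of_isGap hl h
      (h.image hφ (fun c hc => hφC ▸ mem_image_of_mem φ hc) fun c hc => hφC.symm ▸ hc.2)
  · rw [abs_sub_comm, abs_of_pos (sub_pos.mpr (hφ h.2.2.1))]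
    exact hC.div_mem_range_zpow_of_isGap hl h (h.image_of_strictAnti hφ hφC)

theorem abs_deriv_mem_range_zpow (hC : IsCentralCantor l C) (hl : 2 < l) {φ : ℝ → ℝ}
    (hφ : ContDiff ℝ 1 φ) (hinj : Function.Injective φ) (hφC : φ '' C = C) {a : ℝ} (ha : a ∈ C)
    (hderiv : deriv φ a ≠ 0) : |deriv φ a| ∈ range fun k : ℤ => l ^ k := by
  refine mem_range_zpow_of_mem_closure (by linarith) (abs_pos.mpr hderiv)
    (abs_deriv_mem_closure_of_slopes hφ fun ε hε => ?_)
  obtain ⟨n, hn⟩ := exists_pow_lt_of_lt_one hε (inv_lt_one_of_one_lt₀ (by linarith : 1 < l))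
  obtain ⟨x, y, hg, hx, hy⟩ := hC.exists_isGap_near hl n ha
  refine ⟨x, y, hg.2.2.1, fun ξ hξ => ?_, hC.slope_mem_range_zpow_of_isGap hl
    (hφ.continuous.strictMono_of_inj hinj) hφC hg⟩
  rw [Metric.mem_ball, Real.dist_eq, abs_sub_lt_iff]
  constructor <;> linarith [hξ.1, hξ.2]

end IsCentralCantor

/-- For any `C¹` diffeomorphism `φ` of ℝ preserving the central Cantor set `C_λ`
(λ > 2), at every point of `C_λ` the derivative of `φ` is, up to sign, an integer
power of λ; moreover `φ'` takes only finitely many values on `C_λ`. -/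
theorem deriv_on_centralCantor_powers (l : ℝ) (hl : 2 < l) (C : Set ℝ)
    (hC : IsCentralCantor l C) (φ ψ : ℝ → ℝ) (hφ : IsC1DiffeoPair φ ψ)
    (hpres : φ '' C = C) :
    (∀ a ∈ C, ∃ k : ℤ, deriv φ a = l ^ k ∨ deriv φ a = -(l ^ k)) ∧
    Set.Finite ((fun a => deriv φ a) '' C) := by
  obtain ⟨hφ₁, hψ₁, hleft, -⟩ := hφ
  have hpow : ∀ a ∈ C, |deriv φ a| ∈ range fun k : ℤ => l ^ k := fun a ha =>
    hC.abs_deriv_mem_range_zpow hl hφ₁ hleft.injective hpres ha <|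
      deriv_ne_zero_of_leftInverse hleft (hφ₁.differentiable one_ne_zero a)
        (hψ₁.differentiable one_ne_zero _)
  refine ⟨fun a ha => ?_, finite_image_of_abs_mem_range_zpow (by linarith) hC.1
    (hφ₁.continuous_deriv le_rfl).continuousOn hpow⟩
  obtain ⟨k, hk⟩ := hpow a ha
  exact ⟨k, (abs_eq (zpow_pos (by linarith) k).le).mp hk.symm⟩
end
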